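/- Let ρ satisfy ∫_u¹ ρ(v) dv = C_{α,θ} u^{-α}(1-u)^θ where C_{α,θ} = Γ(θ+2-α)/(Γ(1-α)Γ(1+θ)), with 0 ≤ α < 1, θ ≥ 0. Then the Lévy exponent φ(r) = ∫₀¹ r(1-u)^{r-1}(∫_u¹ ρ(v)dv) du equals r Γ(θ+r) Γ(θ+2-α) / (Γ(θ+1) Γ(θ-α+r+1)) for each positive integer r. -/

import Mathlib

/-!
Substituting the tail `C u^(-α) (1-u)^θ` turns the integrand into `r C` times the Beta kernel
`u^((1-α)-1) (1-u)^((θ+r)-1)`, so `φ(r) = r C B(1-α, θ+r)` and the factors `Γ(1-α)` cancel.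
-/

open MeasureTheory Real Set

theorem integral_Ioo_rpow_mul_one_sub_rpow {a b : ℝ} (ha : 0 < a) (hb : 0 < b) :
    ∫ x in Ioo (0:ℝ) 1, x ^ (a - 1) * (1 - x) ^ (b - 1)
      = Gamma a * Gamma b / Gamma (a + b) := by
  have hbeta :
      Complex.betaIntegral a b = ∫ x in Ioo (0:ℝ) 1, x ^ (a - 1) * (1 - x) ^ (b - 1) := by
    rw [Complex.betaIntegral, intervalIntegral.integral_of_le zero_le_one,
      integral_Ioc_eq_integral_Ioo, ← integral_complex_ofReal]
    refine setIntegral_congr_fun measurableSet_Ioo fun x hx ↦ ?_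
    rw [Complex.ofReal_mul, Complex.ofReal_cpow hx.1.le,
      Complex.ofReal_cpow (sub_nonneg.2 hx.2.le)]
    push_cast
    rfl
  have h := congrArg Complex.re (Complex.Gamma_mul_Gamma_eq_betaIntegral
    (s := a) (t := b) (by simpa using ha) (by simpa using hb))
  rw [hbeta] at h
  simp only [← Complex.ofReal_add, Complex.Gamma_ofReal, ← Complex.ofReal_mul,
    Complex.ofReal_re] at h
  rw [h, mul_div_cancel_left₀ _ (Gamma_pos_of_pos (add_pos ha hb)).ne']

theorem pow_sub_one_mul_rpow {x : ℝ} (hx : 0 < x) {r : ℕ} (hr : 1 ≤ r) (θ : ℝ) :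
    x ^ (r - 1) * x ^ θ = x ^ (θ + r - 1) := by
  rw [← rpow_natCast, ← rpow_add hx, Nat.cast_sub hr, Nat.cast_one]
  ring_nf

theorem two_parameter_levy_exponent_general
    (α θ : ℝ) (hα1 : α < 1) (hθ : 0 ≤ θ)
    (ρ : ℝ → ℝ)
    (htail : ∀ u ∈ Ioo (0:ℝ) 1,
      ∫ v in Ioo u 1, ρ v
        = Real.Gamma (θ + 2 - α) / (Real.Gamma (1 - α) * Real.Gamma (1 + θ))
            * u ^ (-α) * (1 - u) ^ θ) :
    ∀ r : ℕ, 1 ≤ r →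
      ∫ u in Ioo (0:ℝ) 1, (r : ℝ) * (1 - u) ^ (r - 1) * ∫ v in Ioo u 1, ρ v
        = r * Real.Gamma (θ + r) * Real.Gamma (θ + 2 - α)
            / (Real.Gamma (θ + 1) * Real.Gamma (θ - α + r + 1)) := by
  intro r hr
  have hr' : (1:ℝ) ≤ r := by exact_mod_cast hr
  set C := Gamma (θ + 2 - α) / (Gamma (1 - α) * Gamma (1 + θ)) with hC
  have hintegrand : ∀ u ∈ Ioo (0:ℝ) 1, (r : ℝ) * (1 - u) ^ (r - 1) * ∫ v in Ioo u 1, ρ v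
      = (r * C) * (u ^ ((1 - α) - 1) * (1 - u) ^ ((θ + r) - 1)) := fun u hu ↦ by
    rw [htail u hu, ← pow_sub_one_mul_rpow (sub_pos.2 hu.2) hr, sub_sub_cancel_left]
    ring
  rw [setIntegral_congr_fun measurableSet_Ioo hintegrand, integral_const_mul,
    integral_Ioo_rpow_mul_one_sub_rpow (by linarith) (by linarith),
    show 1 - α + (θ + r) = θ - α + r + 1 by ring, hC, add_comm 1 θ]
  have hΓα : Gamma (1 - α) ≠ 0 := (Gamma_pos_of_pos (sub_pos.2 hα1)).ne'
  have hΓθ : Gamma (θ + 1) ≠ 0 := (Gamma_pos_of_pos (by linarith)).ne'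
  field_simp

theorem two_parameter_levy_exponent
    (α θ : ℝ) (hα0 : 0 ≤ α) (hα1 : α < 1) (hθ : 0 ≤ θ)
    (ρ : ℝ → ℝ) (hρmeas : Measurable ρ)
    (hρnn : ∀ u ∈ Ioo (0:ℝ) 1, 0 ≤ ρ u)
    (htail : ∀ u ∈ Ioo (0:ℝ) 1,
      ∫ v in Ioo u 1, ρ v
        = Real.Gamma (θ + 2 - α) / (Real.Gamma (1 - α) * Real.Gamma (1 + θ))
            * u ^ (-α) * (1 - u) ^ θ) :
    ∀ r : ℕ, 1 ≤ r →
      ∫ u in Ioo (0:ℝ) 1, (r : ℝ) * (1 - u) ^ (r - 1) * ∫ v in Ioo u 1, ρ v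
        = r * Real.Gamma (θ + r) * Real.Gamma (θ + 2 - α)
            / (Real.Gamma (θ + 1) * Real.Gamma (θ - α + r + 1)) :=
  two_parameter_levy_exponent_general α θ hα1 hθ ρ htail
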